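/- arXiv:1612.06668 — 4 statements merged into one kernel-verified Lean document; each statement's English description precedes it below -/
import Mathlib

section
/- For the pull-stream representation of an array, folding equals the standard array fold: for any array `arr : Array α`, function `f : β → α → β`, and initial value `z : β`, folding the pull stream `of_arr arr` (whose state is a natural-number index starting at 0, and whose step function at state `i` returns `Cons (arr[i], i+1)` if `i < arr.size` and `Nil` otherwise) with `f` and `z` equals `arr.foldl f z`. -/
/-- Fold of the pull stream `of_arr arr`: state is a natural-number index,
    step at `i` yields `some (arr[i], i+1)` if `i < arr.size`, else `none`. -/
def foldOfArr {α β : Type} (arr : Array α) (f : β → α → β) : β → ℕ → β :=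
  fun z i =>
    if h : i < arr.size then foldOfArr arr f (f z arr[i]) (i + 1) else z
termination_by _ i => arr.size - i
decreasing_by omega

theorem foldOfArr_eq_foldl_drop {α β : Type} (arr : Array α) (f : β → α → β) (z : β) (i : ℕ) :
    foldOfArr arr f z i = (arr.toList.drop i).foldl f z := by
  induction z, i using foldOfArr.induct arr f with
  | case1 z i h ih =>
    rw [foldOfArr, dif_pos h, ih, List.drop_eq_getElem_cons (i := i) (by simpa using h),
      List.foldl_cons, Array.getElem_toList]
  | case2 z i h =>
    rw [foldOfArr, dif_neg h, List.drop_eq_nil_of_le (by simpa using h), List.foldl_nil]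

theorem fold_of_arr_eq_foldl {α β : Type} (arr : Array α) (f : β → α → β) (z : β) :
    foldOfArr arr f z 0 = arr.foldl f z := by
  rw [foldOfArr_eq_foldl_drop, List.drop_zero, Array.foldl_toList]
end

section
/- Semantic correctness of take: if the pull stream `(σ, s₀, step)` produces the (possibly shorter than `n`) list `l`, then the stream `take n` of it—implemented with state `ℕ × σ` tracking the remaining count, with step `(k, s) ↦ if k = 0 then none else (step s).map (fun (a,t) => (a, (k-1, t)))` and initial state `(n, s₀)`—produces exactly `l.take n`. Moreover, for a possibly infinite stream given by `step : σ → Option (α × σ)`, `take n` always produces a list of length at most `n`. -/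
inductive Produces {σ α : Type} (step : σ → Option (α × σ)) : σ → List α → Prop
  | nil {s : σ} : step s = none → Produces step s []
  | cons {s t : σ} {a : α} {l : List α} :
      step s = some (a, t) → Produces step t l → Produces step s (a :: l)

/-- Step function of `take`: the state carries the remaining count. -/
def takeStep {σ α : Type} (step : σ → Option (α × σ)) :
    ℕ × σ → Option (α × (ℕ × σ)) :=
  fun p =>
    if p.1 = 0 then none
    else (step p.2).map (fun q => (q.1, (p.1 - 1, q.2)))

theorem take_produces {σ α : Type} (step : σ → Option (α × σ)) :
    (∀ (s₀ : σ) (l : List α) (n : ℕ),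
      Produces step s₀ l → Produces (takeStep step) (n, s₀) (l.take n)) ∧
    (∀ (s₀ : σ) (n : ℕ) (l : List α),
      Produces (takeStep step) (n, s₀) l → l.length ≤ n) := by
  constructor
  · intro s₀ l n h
    induction h generalizing n with
    | nil hs =>
      simp only [List.take_nil]
      cases n with
      | zero => exact Produces.nil (by simp [takeStep])
      | succ n => exact Produces.nil (by simp [takeStep, hs])
    | cons hs _ ih =>
      cases n with
      | zero => exact Produces.nil (by simp [takeStep])
      | succ n =>
        exact Produces.cons (by simp [takeStep, hs]) (ih n)
  · suffices h : ∀ (p : ℕ × σ) (l : List α),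
        Produces (takeStep step) p l → l.length ≤ p.1 by
      intro s₀ n l hp; exact h (n, s₀) l hp
    intro p l h
    induction h with
    | nil => simp
    | @cons p t a l hs _ ih =>
      obtain ⟨k, s⟩ := p
      simp only [takeStep] at hs
      by_cases hk : k = 0
      · simp [hk] at hs
      · simp only [hk, if_false, Option.map_eq_some_iff] at hs
        obtain ⟨⟨a', s'⟩, _, heq⟩ := hs
        cases heq
        have := ih
        simp only [List.length_cons]
        omega
end

section
/- Semantic correctness of zip for linear pull streams: if pull streams `(σ₁, s₁, step₁)` and `(σ₂, s₂, step₂)` produce lists `l₁` and `l₂` respectively, then the zipped stream with state `σ₁ × σ₂`, initial state `(s₁, s₂)`, and step `(t₁, t₂) ↦ match step₁ t₁, step₂ t₂ with | some (a, t₁'), some (b, t₂') => some ((a,b), (t₁', t₂')) | _, _ => none` produces exactly `l₁.zip l₂`. -/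
/-- Lockstep step function of the zipped stream. -/
def zipStep {σ₁ σ₂ α β : Type} (step₁ : σ₁ → Option (α × σ₁))
    (step₂ : σ₂ → Option (β × σ₂)) :
    σ₁ × σ₂ → Option ((α × β) × (σ₁ × σ₂)) :=
  fun p =>
    match step₁ p.1, step₂ p.2 with
    | some (a, t₁), some (b, t₂) => some ((a, b), (t₁, t₂))
    | _, _ => none

theorem zip_produces {σ₁ σ₂ α β : Type} (step₁ : σ₁ → Option (α × σ₁))
    (step₂ : σ₂ → Option (β × σ₂)) (s₁ : σ₁) (s₂ : σ₂)
    (l₁ : List α) (l₂ : List β)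
    (h₁ : Produces step₁ s₁ l₁) (h₂ : Produces step₂ s₂ l₂) :
    Produces (zipStep step₁ step₂) (s₁, s₂) (l₁.zip l₂) := by
  induction h₁ generalizing s₂ l₂ with
  | nil h => exact .nil (by simp [zipStep, h])
  | cons h hrest ih =>
    cases h₂ with
    | nil h' => exact .nil (by simp [zipStep, h, h'])
    | cons h' hrest' =>
      exact .cons (by simp [zipStep, h, h']) (ih _ _ hrest')
end

section
/- Semantic correctness of flat_map: if the outer pull stream `(σ, s₀, step)` produces list `l : List α`, and for each `a : α` the inner stream `inner a = (τ a, t₀ a, istep a)` produces list `g a : List β`, then the flattened stream—whose state is the outer state paired with an optional running inner state, advancing the inner stream when present and otherwise pulling the next outer element to initialize a new inner stream—produces exactly `l.flatMap g` (i.e., `(l.map g).flatten`). -/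
/-- `Produces` for a relationally-specified step function. -/
inductive ProducesR {σ α : Type} (step : σ → Option (α × σ) → Prop) :
    σ → List α → Prop
  | nil {s : σ} : step s none → ProducesR step s []
  | cons {s t : σ} {a : α} {l : List α} :
      step s (some (a, t)) → ProducesR step t l → ProducesR step s (a :: l)

/-- Step relation of the flattened stream: state is the outer state together
    with an optional current outer element and running inner state. -/
inductive FMStep {σ τ α β : Type} (step : σ → Option (α × σ))
    (init : α → τ) (istep : α → τ → Option (β × τ)) :
    σ × Option (α × τ) → Option (β × (σ × Option (α × τ))) → Prop
  | innerSome {s : σ} {a : α} {t t' : τ} {b : β} :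
      istep a t = some (b, t') →
      FMStep step init istep (s, some (a, t)) (some (b, (s, some (a, t'))))
  | innerNone {s : σ} {a : α} {t : τ} {r} :
      istep a t = none → FMStep step init istep (s, none) r →
      FMStep step init istep (s, some (a, t)) r
  | outerNone {s : σ} :
      step s = none → FMStep step init istep (s, none) none
  | outerSome {s s' : σ} {a : α} {r} :
      step s = some (a, s') →
      FMStep step init istep (s', some (a, init a)) r →
      FMStep step init istep (s, none) r

lemma fm_inner {σ τ α β : Type} {step : σ → Option (α × σ)}
    {init : α → τ} {istep : α → τ → Option (β × τ)}
    {a : α} {t : τ} {m : List β} (h : Produces (istep a) t m)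
    {s : σ} {rest : List β}
    (hrest : ProducesR (FMStep step init istep) (s, none) rest) :
    ProducesR (FMStep step init istep) (s, some (a, t)) (m ++ rest) := by
  induction h with
  | nil h =>
    cases hrest with
    | nil h' => exact ProducesR.nil (FMStep.innerNone h h')
    | cons h' h'' => exact ProducesR.cons (FMStep.innerNone h h') h''
  | cons h _ ih =>
    exact ProducesR.cons (FMStep.innerSome h) ih

lemma fm_lift {σ τ α β : Type} {step : σ → Option (α × σ)}
    {init : α → τ} {istep : α → τ → Option (β × τ)}
    {s s' : σ} {a : α} (hstep : step s = some (a, s')) {xs : List β}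
    (h : ProducesR (FMStep step init istep) (s', some (a, init a)) xs) :
    ProducesR (FMStep step init istep) (s, none) xs := by
  cases h with
  | nil h' => exact ProducesR.nil (FMStep.outerSome hstep h')
  | cons h' h'' => exact ProducesR.cons (FMStep.outerSome hstep h') h''

theorem flat_map_produces {σ τ α β : Type} (step : σ → Option (α × σ))
    (init : α → τ) (istep : α → τ → Option (β × τ))
    (g : α → List β) (s₀ : σ) (l : List α)
    (houter : Produces step s₀ l)
    (hinner : ∀ a : α, Produces (istep a) (init a) (g a)) :
    ProducesR (FMStep step init istep) (s₀, none) (l.flatMap g) := by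
  induction houter with
  | nil h => exact ProducesR.nil (FMStep.outerNone h)
  | @cons s t a l h _ ih =>
    rw [List.flatMap_cons]
    exact fm_lift h (fm_inner (hinner a) ih)
end
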